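/- arXiv:0804.4050 — 2 statements merged into one kernel-verified Lean document; each statement's English description precedes it below -/
import Mathlib

section
/- The 4×4 matrix identity CZ = G(H,H) · G(X,X) · SWAP · G(H,H) holds, where CZ = diag(1,1,1,−1), SWAP is the two-qubit swap gate, X is the Pauli X matrix, and H = (X + Z)/√2 is the Hadamard matrix. -/
open Matrix Complex

noncomputable section

/-- Pauli X matrix. -/
def pX : Matrix (Fin 2) (Fin 2) ℂ := !![0, 1; 1, 0]

/-- Pauli Z matrix. -/
def pZ : Matrix (Fin 2) (Fin 2) ℂ := !![1, 0; 0, -1]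

/-- The two-qubit gate `G(A,B)` (basis ordering `|00⟩,|01⟩,|10⟩,|11⟩`): it acts as `A`
on the even-parity subspace and as `B` on the odd-parity subspace. -/
def G (A B : Matrix (Fin 2) (Fin 2) ℂ) : Matrix (Fin 4) (Fin 4) ℂ :=
  !![A 0 0, 0,     0,     A 0 1;
     0,     B 0 0, B 0 1, 0;
     0,     B 1 0, B 1 1, 0;
     A 1 0, 0,     0,     A 1 1]

/-- The controlled-Z gate `diag(1,1,1,-1)`. -/
def CZ : Matrix (Fin 4) (Fin 4) ℂ :=
  !![1, 0, 0, 0;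
     0, 1, 0, 0;
     0, 0, 1, 0;
     0, 0, 0, -1]

/-- The two-qubit SWAP gate: the permutation matrix exchanging `|01⟩` and `|10⟩`. -/
def SWAP : Matrix (Fin 4) (Fin 4) ℂ :=
  !![1, 0, 0, 0;
     0, 0, 1, 0;
     0, 1, 0, 0;
     0, 0, 0, 1]

/-- The Hadamard matrix `H = (X + Z)/√2`. -/
def Had : Matrix (Fin 2) (Fin 2) ℂ :=
  ((Real.sqrt 2 : ℂ))⁻¹ • !![1, 1; 1, -1]

set_option maxHeartbeats 2000000 in
/-- `CZ = G(H,H) · G(X,X) · SWAP · G(H,H)`. -/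
theorem CZ_eq_G_H_H_mul_G_X_X_mul_SWAP_mul_G_H_H :
    CZ = G Had Had * G pX pX * SWAP * G Had Had := by
  have h2 : ((Real.sqrt 2 : ℂ)) ^ 2 = 2 := by
    norm_cast
    rw [sq, Real.mul_self_sqrt (by norm_num : (0:ℝ) ≤ 2)]
  simp only [CZ, G, SWAP, Had, pX, smul_eq_mul, Matrix.smul_of, Matrix.smul_cons,
    Matrix.smul_empty]
  ext i j
  fin_cases i <;> fin_cases j <;>
    simp [Matrix.mul_apply, Fin.sum_univ_succ, Matrix.vecHead, Matrix.vecTail] <;>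
    ring_nf <;>
    simp [h2]
end
end

section
/- For every pair of 2×2 special unitary matrices A, B ∈ SU(2), there exists a real antisymmetric 4×4 matrix h such that G(A,B) = exp(iH), where H = i Σ_{μ≠ν} h_{μν} c_μ c_ν is the quadratic Hamiltonian built from the two-qubit Jordan–Wigner operators c_1 = X⊗I, c_2 = Y⊗I, c_3 = Z⊗X, c_4 = Z⊗Y. That is, every nearest-neighbour G(A,B) gate with A, B ∈ SU(2) is a Gaussian operation. -/
open Matrix Complex

noncomputable section

/-- Pauli Y matrix. -/
def pY : Matrix (Fin 2) (Fin 2) ℂ := !![0, -Complex.I; Complex.I, 0]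

/-- Kronecker product of two 2×2 matrices, as a 4×4 matrix
(basis ordering `|00⟩,|01⟩,|10⟩,|11⟩`). -/
def kron4 (P Q : Matrix (Fin 2) (Fin 2) ℂ) : Matrix (Fin 4) (Fin 4) ℂ :=
  Matrix.of fun i j =>
    P ⟨(i : ℕ) / 2, by have := i.isLt; omega⟩ ⟨(j : ℕ) / 2, by have := j.isLt; omega⟩ *
      Q ⟨(i : ℕ) % 2, by omega⟩ ⟨(j : ℕ) % 2, by omega⟩

/-- The Jordan–Wigner operators on two qubits:
`c_1 = X⊗I`, `c_2 = Y⊗I`, `c_3 = Z⊗X`, `c_4 = Z⊗Y`. -/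
def c1 : Matrix (Fin 4) (Fin 4) ℂ := kron4 pX 1
def c2 : Matrix (Fin 4) (Fin 4) ℂ := kron4 pY 1
def c3 : Matrix (Fin 4) (Fin 4) ℂ := kron4 pZ pX
def c4 : Matrix (Fin 4) (Fin 4) ℂ := kron4 pZ pY

/-- The two-qubit Jordan–Wigner operators, as a family. -/
def cvec : Fin 4 → Matrix (Fin 4) (Fin 4) ℂ := ![c1, c2, c3, c4]

/-- The quadratic Hamiltonian `H = i ∑_{μ≠ν} h_{μν} c_μ c_ν` on two qubits. -/
def quadH2 (h : Matrix (Fin 4) (Fin 4) ℝ) : Matrix (Fin 4) (Fin 4) ℂ :=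
  Complex.I • ∑ μ, ∑ ν, if μ ≠ ν then (h μ ν : ℂ) • (cvec μ * cvec ν) else 0

/-! `SU(2)` is the group of unit quaternions, and every unit quaternion is the exponential of a
purely imaginary one, so `A = exp a` and `B = exp b` with `a, b ∈ su(2)`. The gate `G(A,B)` acts
by `A` on the even-parity subspace `span{|00⟩,|11⟩}` and by `B` on the odd one, hence
`(A, B) ↦ G(A,B)` is an algebra homomorphism and `G(A,B) = exp G(a,b)`. Finally the bilinears
`c_μ c_ν` span `so(4) ≅ su(2) ⊕ su(2)`, acting blockwise on the two parity sectors, so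
`G(a,b) = i H` for an explicit real antisymmetric `h`. -/

open Quaternion

theorem Matrix.conjTranspose_eq_adjugate {n R : Type*} [Fintype n] [DecidableEq n] [CommRing R]
    [StarRing R] {A : Matrix n n R} (hA : Aᴴ * A = 1) (hAdet : A.det = 1) : Aᴴ = A.adjugate :=
  calc Aᴴ = Aᴴ * (A * A.adjugate) := by rw [mul_adjugate, hAdet, one_smul, mul_one]
    _ = A.adjugate := by rw [← mul_assoc, hA, one_mul]

theorem Quaternion.exists_re_eq_zero_exp_eq {u : ℍ[ℝ]} (hu : ‖u‖ = 1) :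
    ∃ q : ℍ[ℝ], q.re = 0 ∧ NormedSpace.exp q = u := by
  -- polar form `u = cos θ + sin θ • v` with `θ = arccos u.re`; `v` is arbitrary when `u = ±1`
  obtain ⟨v, hv_re, hv_norm, hv⟩ : ∃ v : ℍ[ℝ], v.re = 0 ∧ ‖v‖ = 1 ∧ u.im = ‖u.im‖ • v := by
    by_cases h : u.im = 0
    · refine ⟨(equivTuple ℝ).symm ![0, 1, 0, 0], rfl, ?_, by rw [h, norm_zero, zero_smul]⟩
      rw [norm_eq_sqrt_real_inner, inner_self, normSq_def']
      simp
    · have h' : ‖u.im‖ ≠ 0 := norm_ne_zero_iff.mpr h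
      refine ⟨‖u.im‖⁻¹ • u.im, by simp, ?_, ?_⟩
      · rw [norm_smul, norm_inv, norm_norm, inv_mul_cancel₀ h']
      · rw [smul_smul, mul_inv_cancel₀ h', one_smul]
  have hpyth : u.re ^ 2 + ‖u.im‖ ^ 2 = 1 := by
    have h := normSq_eq_norm_mul_self u
    have h' := normSq_eq_norm_mul_self u.im
    simp only [normSq_def', hu, re_im, imI_im, imJ_im, imK_im] at h h'
    nlinarith
  set θ := Real.arccos u.re
  have hcos : Real.cos θ = u.re := Real.cos_arccos (by nlinarith) (by nlinarith)
  have hsin : Real.sin θ = ‖u.im‖ := by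
    rw [Real.sin_arccos, show 1 - u.re ^ 2 = ‖u.im‖ ^ 2 by linarith, Real.sqrt_sq (norm_nonneg _)]
  have hnorm : ‖θ • v‖ = θ := by
    rw [norm_smul, hv_norm, mul_one, Real.norm_of_nonneg (Real.arccos_nonneg _)]
  refine ⟨θ • v, by simp [hv_re], ?_⟩
  rw [exp_of_re_eq_zero _ (by simp [hv_re]), hnorm, smul_smul,
    div_mul_cancel_of_imp (fun h => by simp [h]), hcos, hsin, ← hv, re_add_im]

def quaternionBasis : QuaternionAlgebra.Basis (Matrix (Fin 2) (Fin 2) ℂ) (-1 : ℝ) 0 (-1) where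
  i := I • pZ
  j := I • pY
  k := I • pX
  i_mul_i := by ext i j; fin_cases i <;> fin_cases j <;> simp [pZ]
  j_mul_j := by ext i j; fin_cases i <;> fin_cases j <;> simp [pY]
  i_mul_j := by ext i j; fin_cases i <;> fin_cases j <;> simp [pX, pY, pZ]
  j_mul_i := by ext i j; fin_cases i <;> fin_cases j <;> simp [pX, pY, pZ]

def quaternionRep : ℍ[ℝ] →ₐ[ℝ] Matrix (Fin 2) (Fin 2) ℂ := quaternionBasis.liftHom

theorem quaternionRep_apply (q : ℍ[ℝ]) : quaternionRep q =
    !![q.re + q.imI * I, q.imJ + q.imK * I; -q.imJ + q.imK * I, q.re - q.imI * I] := by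
  change quaternionBasis.lift q = _
  unfold QuaternionAlgebra.Basis.lift
  ext i j
  fin_cases i <;> fin_cases j <;>
    simp [quaternionBasis, pX, pY, pZ, Algebra.algebraMap_eq_smul_one]; ring

theorem det_quaternionRep (q : ℍ[ℝ]) : (quaternionRep q).det = ((normSq q : ℝ) : ℂ) := by
  rw [quaternionRep_apply, det_fin_two_of, normSq_def']
  push_cast
  linear_combination (-(q.imI ^ 2 + q.imK ^ 2) : ℂ) * I_sq

theorem exists_quaternionRep_eq {A : Matrix (Fin 2) (Fin 2) ℂ} (hA : Aᴴ * A = 1)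
    (hAdet : A.det = 1) : ∃ u : ℍ[ℝ], ‖u‖ = 1 ∧ quaternionRep u = A := by
  have hadj := Matrix.conjTranspose_eq_adjugate hA hAdet
  rw [adjugate_fin_two] at hadj
  have h11 : A 1 1 = star (A 0 0) := by simpa using (congrFun₂ hadj 0 0).symm
  have h10 : A 1 0 = -star (A 0 1) :=
    neg_eq_iff_eq_neg.mp (by simpa using congrArg (fun z => -star z) (congrFun₂ hadj 0 1))
  set u : ℍ[ℝ] := ⟨(A 0 0).re, (A 0 0).im, (A 0 1).re, (A 0 1).im⟩
  have hu : quaternionRep u = A := by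
    rw [quaternionRep_apply]
    ext i j
    fin_cases i <;> fin_cases j <;> simp [u, h11, h10, Complex.ext_iff]
  have hnormSq : normSq u = 1 := by exact_mod_cast (det_quaternionRep u).symm.trans (hu ▸ hAdet)
  exact ⟨u, by rw [norm_eq_sqrt_real_inner, inner_self, hnormSq, Real.sqrt_one], hu⟩

def parityEmbedding :
    (Matrix (Fin 2) (Fin 2) ℂ × Matrix (Fin 2) (Fin 2) ℂ) →ₐ[ℂ] Matrix (Fin 4) (Fin 4) ℂ where
  toFun P := G P.1 P.2
  map_one' := by ext i j; fin_cases i <;> fin_cases j <;> simp [G]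
  map_mul' P Q := by
    ext i j
    fin_cases i <;> fin_cases j <;> simp [G, Matrix.mul_apply, Fin.sum_univ_four, Fin.sum_univ_two]
  map_zero' := by ext i j; fin_cases i <;> fin_cases j <;> simp [G]
  map_add' P Q := by ext i j; fin_cases i <;> fin_cases j <;> simp [G]
  commutes' r := by
    ext i j; fin_cases i <;> fin_cases j <;> simp [G, Matrix.algebraMap_eq_diagonal]

section

attribute [local instance] Matrix.linftyOpNormedRing Matrix.linftyOpNormedAlgebra

theorem exp_G_quaternionRep (q q' : ℍ[ℝ]) :
    NormedSpace.exp (G (quaternionRep q) (quaternionRep q')) =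
      G (quaternionRep (NormedSpace.exp q)) (quaternionRep (NormedSpace.exp q')) := by
  let : NormedAlgebra ℚ ℍ[ℝ] := .restrictScalars ℚ ℝ ℍ[ℝ]
  let φ := (parityEmbedding.restrictScalars ℝ).comp (quaternionRep.prodMap quaternionRep)
  have hφ : ∀ p, φ p = G (quaternionRep p.1) (quaternionRep p.2) := fun _ => rfl
  refine (NormedSpace.map_exp φ φ.toLinearMap.continuous_of_finiteDimensional (q, q')).symm.trans ?_
  rw [hφ, Prod.fst_exp, Prod.snd_exp]

end

theorem cvec_eq : cvec = ![!![0, 0, 1, 0; 0, 0, 0, 1; 1, 0, 0, 0; 0, 1, 0, 0],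
    !![0, 0, -I, 0; 0, 0, 0, -I; I, 0, 0, 0; 0, I, 0, 0],
    !![0, 1, 0, 0; 1, 0, 0, 0; 0, 0, 0, -1; 0, 0, -1, 0],
    !![0, -I, 0, 0; I, 0, 0, 0; 0, 0, 0, I; 0, 0, -I, 0]] := by
  ext μ i j
  fin_cases μ <;> fin_cases i <;> fin_cases j <;>
    simp [cvec, c1, c2, c3, c4, kron4, pX, pY, pZ, Matrix.one_apply]

/- In the parity blocks, `c₁c₂ = G(iZ, iZ)`, `c₃c₄ = G(iZ, -iZ)`, `c₁c₃ = G(-iY, -iY)`,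
`c₂c₄ = G(iY, -iY)`, `c₁c₄ = G(iX, -iX)`, `c₂c₃ = G(iX, iX)`, while for purely imaginary `q`,
`quaternionRep q = i (q.imI Z + q.imJ Y + q.imK X)`. Solving
`i H = G(quaternionRep q, quaternionRep q')` for the upper triangle of `h` gives `K` below. -/
def hamiltonianCoeff (q q' : ℍ[ℝ]) : Matrix (Fin 4) (Fin 4) ℝ :=
  let K : Matrix (Fin 4) (Fin 4) ℝ := (4 : ℝ)⁻¹ •
    !![0, -(q.imI + q'.imI), q.imJ + q'.imJ, q'.imK - q.imK;
       0, 0, -(q.imK + q'.imK), q'.imJ - q.imJ;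
       0, 0, 0, q'.imI - q.imI;
       0, 0, 0, 0]
  K - Kᵀ

theorem hamiltonianCoeff_transpose (q q' : ℍ[ℝ]) :
    (hamiltonianCoeff q q')ᵀ = -hamiltonianCoeff q q' := by
  simp only [hamiltonianCoeff, transpose_sub, transpose_transpose, neg_sub]

theorem I_smul_quadH2_hamiltonianCoeff {q q' : ℍ[ℝ]} (hq : q.re = 0) (hq' : q'.re = 0) :
    I • quadH2 (hamiltonianCoeff q q') = G (quaternionRep q) (quaternionRep q') := by
  rw [quadH2, cvec_eq, quaternionRep_apply, quaternionRep_apply, hq, hq']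
  simp only [Fin.sum_univ_four, ne_eq, Fin.reduceEq, not_false_eq_true, not_true_eq_false,
    if_true, if_false, add_zero, zero_add]
  ext i j
  simp only [Matrix.smul_apply, Matrix.add_apply, Matrix.mul_apply, Fin.sum_univ_four, smul_eq_mul]
  fin_cases i <;> fin_cases j <;>
    simp [G, hamiltonianCoeff] <;> ring_nf <;> simp [Complex.ext_iff]

/-- Every nearest-neighbour `G(A,B)` gate with `A, B ∈ SU(2)` is a Gaussian operation:
`G(A,B) = exp(iH)` for a quadratic Hamiltonian `H` with real antisymmetric `h`. -/
theorem G_gate_is_gaussian (A B : Matrix (Fin 2) (Fin 2) ℂ)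
    (hA : Aᴴ * A = 1) (hAdet : A.det = 1)
    (hB : Bᴴ * B = 1) (hBdet : B.det = 1) :
    ∃ h : Matrix (Fin 4) (Fin 4) ℝ, hᵀ = -h ∧
      G A B = NormedSpace.exp (Complex.I • quadH2 h) := by
  obtain ⟨u, hu, rfl⟩ := exists_quaternionRep_eq hA hAdet
  obtain ⟨u', hu', rfl⟩ := exists_quaternionRep_eq hB hBdet
  obtain ⟨q, hq, rfl⟩ := Quaternion.exists_re_eq_zero_exp_eq hu
  obtain ⟨q', hq', rfl⟩ := Quaternion.exists_re_eq_zero_exp_eq hu'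
  refine ⟨hamiltonianCoeff q q', hamiltonianCoeff_transpose q q', ?_⟩
  rw [I_smul_quadH2_hamiltonianCoeff hq hq', exp_G_quaternionRep]

end
end
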